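/- Let g be a complex-valued Haar-integrable function on k, let a, b ∈ F and γ ∈ Γ, and set f = g^{a,γ}·ψ_b ∈ 𝓛(F,ψ). Then the Fourier transform f̂(x) := ∫^F f(y)ψ(xy) dy satisfies f̂ = ψ(ab)·(ĝ)^{−b,−γ}·ψ_a·X^γ, where ĝ(v) = ∫_k g(u)ψ̄(uv) du is the Fourier transform of g on k with respect to the induced character ψ̄. -/

import Mathlib

noncomputable section

open MeasureTheory

/-- A field `F` with a split valuation `ν : F^× → Γ` (split by `t`), with residue field `k`,
residue map `ρ : O_F → k`, where `Γ` has a minimal positive element `one`. -/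
structure LiftSetup (Γ F k : Type*) [AddCommGroup Γ] [LinearOrder Γ] [IsOrderedAddMonoid Γ] [Field F] [Field k] where
  /-- the valuation (recorded on nonzero elements) -/
  ν : F → Γ
  /-- the splitting homomorphism `t : Γ → F^×` -/
  t : Γ → F
  /-- the residue map (recorded on the valuation ring) -/
  ρ : F → k
  /-- the minimal positive element of `Γ` -/
  one : Γ
  one_pos : 0 < one
  one_min : ∀ γ : Γ, 0 < γ → one ≤ γ
  ν_mul : ∀ x y : F, x ≠ 0 → y ≠ 0 → ν (x * y) = ν x + ν y
  ν_add : ∀ x y : F, x ≠ 0 → y ≠ 0 → x + y ≠ 0 → min (ν x) (ν y) ≤ ν (x + y)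
  t_ne : ∀ γ : Γ, t γ ≠ 0
  t_add : ∀ γ δ : Γ, t (γ + δ) = t γ * t δ
  ν_t : ∀ γ : Γ, ν (t γ) = γ
  ρ_add : ∀ x y : F, (x = 0 ∨ 0 ≤ ν x) → (y = 0 ∨ 0 ≤ ν y) → ρ (x + y) = ρ x + ρ y
  ρ_mul : ∀ x y : F, (x = 0 ∨ 0 ≤ ν x) → (y = 0 ∨ 0 ≤ ν y) → ρ (x * y) = ρ x * ρ y
  ρ_one : ρ 1 = 1
  ρ_surj : ∀ u : k, ∃ x : F, (x = 0 ∨ 0 ≤ ν x) ∧ ρ x = u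
  ρ_eq_zero : ∀ x : F, (x = 0 ∨ 0 ≤ ν x) → (ρ x = 0 ↔ (x = 0 ∨ 0 < ν x))

namespace LiftSetup

variable {Γ F k : Type*} [AddCommGroup Γ] [LinearOrder Γ] [IsOrderedAddMonoid Γ] [Field F] [Field k]
variable (S : LiftSetup Γ F k)

/-- The ring of integers `O_F` of the valuation. -/
def integers : Set F := {x | x = 0 ∨ 0 ≤ S.ν x}

/-- The translated fractional ideal `a + t(γ)O_F`. -/
def fracIdeal (a : F) (γ : Γ) : Set F := {x | (x - a) * S.t (-γ) ∈ S.integers}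

/-- The lift `f^{a,γ}` of a function `f` on the residue field `k`:
`f^{a,γ}(x) = f(ρ((x-a)t(-γ)))` for `x ∈ a + t(γ)O_F` and `0` otherwise. -/
def lift {A : Type*} [Zero A] (f : k → A) (a : F) (γ : Γ) : F → A :=
  (S.fracIdeal a γ).indicator fun x => f (S.ρ ((x - a) * S.t (-γ)))

/-- The homomorphism `η : F^× → k^×`, `x ↦ ρ(x t(-ν x))`. -/
def η (x : F) : k := S.ρ (x * S.t (-S.ν x))

end LiftSetup

section CGamma

variable (Γ : Type*) [AddCommGroup Γ] [LinearOrder Γ] [IsOrderedAddMonoid Γ]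

instance : IsDomain (AddMonoidAlgebra ℂ Γ) := NoZeroDivisors.to_isDomain _

/-- `ℂ(Γ)`: the field of fractions of the complex group algebra of `Γ`. -/
abbrev CGamma : Type _ := FractionRing (AddMonoidAlgebra ℂ Γ)

/-- The canonical embedding `ℂ → ℂ(Γ)`. -/
def embC : ℂ →+* CGamma Γ :=
  (algebraMap (AddMonoidAlgebra ℂ Γ) (CGamma Γ)).comp AddMonoidAlgebra.singleZeroRingHom

variable {Γ}

/-- The basis element `X^γ` of `ℂ(Γ)`. -/
def Xp (γ : Γ) : CGamma Γ :=
  algebraMap (AddMonoidAlgebra ℂ Γ) (CGamma Γ) (AddMonoidAlgebra.single γ 1)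

end CGamma

section GoodChar

variable {Γ F k : Type*} [AddCommGroup Γ] [LinearOrder Γ] [IsOrderedAddMonoid Γ] [Field F] [Field k] [TopologicalSpace k]

/-- `ψ` is a nontrivial good character of `F` of conductor `𝔣`: a homomorphism from the
additive group of `F` to the complex unit circle, trivial on `t(𝔣)O_F`, nontrivial on
`t(𝔣-1)O_F`, whose induced map `ψ̄` on the residue field `k` (given by
`ψ̄(ρ(x)) = ψ(t(𝔣-1)x)` for `x ∈ O_F`) is well defined and continuous. -/
def LiftSetup.IsGoodCharacter (S : LiftSetup Γ F k) (ψ : F → ℂ) (𝔣 : Γ) : Prop :=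
  (∀ x y : F, ψ (x + y) = ψ x * ψ y) ∧
  (∀ x : F, ‖ψ x‖ = 1) ∧
  (∀ x ∈ S.integers, ψ (S.t 𝔣 * x) = 1) ∧
  (∃ x ∈ S.integers, ψ (S.t (𝔣 - S.one) * x) ≠ 1) ∧
  (∃ ψbar : k → ℂ, Continuous ψbar ∧
    ∀ x ∈ S.integers, ψbar (S.ρ x) = ψ (S.t (𝔣 - S.one) * x))

end GoodChar

section LFmu

variable {Γ F k : Type*} [AddCommGroup Γ] [LinearOrder Γ] [IsOrderedAddMonoid Γ] [Field F] [Field k]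
  [MeasurableSpace k]

open MeasureTheory

/-- `𝓛(F)`: the `ℂ(Γ)`-span of the lifts of Haar-integrable functions on `k`. -/
def LFmu (S : LiftSetup Γ F k) (μ : Measure k) : Submodule (CGamma Γ) (F → CGamma Γ) :=
  Submodule.span (CGamma Γ)
    {g | ∃ f : k → ℂ, Integrable f μ ∧ ∃ (a : F) (γ : Γ),
        g = S.lift (fun u => embC Γ (f u)) a γ}

theorem liftC_mem_mu (S : LiftSetup Γ F k) (μ : Measure k)
    {f : k → ℂ} (hf : Integrable f μ) (a : F) (γ : Γ) :
    S.lift (fun u => embC Γ (f u)) a γ ∈ LFmu S μ :=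
  Submodule.subset_span ⟨f, hf, a, γ, rfl⟩

/-- `𝓛^γ`: the complex span of the lifts of Haar-integrable functions at height `γ`. -/
def Lheight (S : LiftSetup Γ F k) (μ : Measure k) (γ : Γ) : Submodule ℂ (F → ℂ) :=
  Submodule.span ℂ {g | ∃ f : k → ℂ, Integrable f μ ∧ ∃ a : F, g = S.lift f a γ}

end LFmu

section LFpsi

variable {Γ F k : Type*} [AddCommGroup Γ] [LinearOrder Γ] [IsOrderedAddMonoid Γ] [Field F] [Field k]
  [MeasurableSpace k]

open MeasureTheory

/-- `𝓛(F,ψ)`: the `ℂ(Γ)`-span of the functions `f·ψ_a` for `f ∈ 𝓛(F)`, `a ∈ F`. -/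
def LFpsi (S : LiftSetup Γ F k) (μ : Measure k) (ψ : F → ℂ) :
    Submodule (CGamma Γ) (F → CGamma Γ) :=
  Submodule.span (CGamma Γ)
    {g | ∃ f ∈ LFmu S μ, ∃ a : F, g = fun x => embC Γ (ψ (a * x)) * f x}

end LFpsi

open scoped Classical in
/-- The Fourier transform on `F`: `f̂(x) = ∫^F f(y)ψ(xy) dy`, computed via the extended
integral `Jext` on `𝓛(F,ψ)` (and defined to be `0` where the integrand is not integrable). -/
noncomputable def fourierF {Γ F k : Type*} [AddCommGroup Γ] [LinearOrder Γ] [IsOrderedAddMonoid Γ] [Field F] [Field k]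
    [MeasurableSpace k] (S : LiftSetup Γ F k) (μ : MeasureTheory.Measure k) (ψ : F → ℂ)
    (Jext : LFpsi S μ ψ →ₗ[CGamma Γ] CGamma Γ) (f : F → CGamma Γ) : F → CGamma Γ :=
  fun x =>
    if hm : (fun y => f y * embC Γ (ψ (x * y))) ∈ LFpsi S μ ψ then Jext ⟨_, hm⟩ else 0


/-!
Write `c = x + b`, so that the integrand of `f̂(x)` is `ψ_c · g^{a,γ}`. If `c t(γ) ∈ O_F`, then on
`a + t(γ)O_F` we have `c y = c a + ((y - a) t(-γ)) (c t(γ))`, so `ψ_c` is `ψ(c a)` times the lift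
of the character `u ↦ ψ̄(u ρ(c t(γ)))` of `k`, and the integral is `ψ(c a) ĝ(ρ(c t(γ))) X^γ`.
Otherwise `c = x₀ / τ` with `ψ(x₀) ≠ 1`, `x₀ ∈ O_F` and `ν(τ) > γ`; the lift `g^{a,γ}` is
`τ`-periodic, so translating by `τ` multiplies the integrand by `ψ(x₀) ≠ 1`, and translation
invariance of `∫^F` forces the integral to vanish.
-/

namespace LiftSetup

variable {Γ F k : Type*} [AddCommGroup Γ] [LinearOrder Γ] [IsOrderedAddMonoid Γ] [Field F] [Field k]
variable (S : LiftSetup Γ F k)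

lemma t_zero : S.t 0 = 1 :=
  mul_left_cancel₀ (S.t_ne 0) (by rw [← S.t_add, add_zero, mul_one])

lemma ν_one : S.ν (1 : F) = 0 :=
  add_left_cancel (a := S.ν 1) (by rw [← S.ν_mul 1 1 one_ne_zero one_ne_zero, mul_one, add_zero])

lemma ν_neg_one : S.ν (-1 : F) = 0 := by
  have h := S.ν_mul (-1) (-1) (neg_ne_zero.mpr one_ne_zero) (neg_ne_zero.mpr one_ne_zero)
  rw [neg_mul_neg, mul_one, ν_one, ← two_nsmul] at h
  exact (smul_eq_zero.mp h.symm).resolve_left two_ne_zero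

lemma ν_neg {x : F} (hx : x ≠ 0) : S.ν (-x) = S.ν x := by
  rw [neg_eq_neg_one_mul, S.ν_mul _ _ (neg_ne_zero.mpr one_ne_zero) hx, ν_neg_one, zero_add]

lemma ν_inv {x : F} (hx : x ≠ 0) : S.ν x⁻¹ = -S.ν x :=
  eq_neg_of_add_eq_zero_right <| by
    rw [← S.ν_mul _ _ hx (inv_ne_zero hx), mul_inv_cancel₀ hx, ν_one]

lemma add_mem_integers {x y : F} (hx : x ∈ S.integers) (hy : y ∈ S.integers) :
    x + y ∈ S.integers := by
  rcases eq_or_ne x 0 with rfl | hx0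
  · rwa [zero_add]
  rcases eq_or_ne y 0 with rfl | hy0
  · rwa [add_zero]
  rcases eq_or_ne (x + y) 0 with hxy | hxy
  · exact Or.inl hxy
  exact Or.inr ((le_min (hx.resolve_left hx0) (hy.resolve_left hy0)).trans
    (S.ν_add x y hx0 hy0 hxy))

lemma mul_mem_integers {x y : F} (hx : x ∈ S.integers) (hy : y ∈ S.integers) :
    x * y ∈ S.integers := by
  rcases eq_or_ne x 0 with rfl | hx0
  · exact Or.inl (zero_mul y)
  rcases eq_or_ne y 0 with rfl | hy0
  · exact Or.inl (mul_zero x)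
  exact Or.inr (S.ν_mul x y hx0 hy0 ▸ add_nonneg (hx.resolve_left hx0) (hy.resolve_left hy0))

lemma neg_mem_integers {x : F} (hx : x ∈ S.integers) : -x ∈ S.integers := by
  rcases eq_or_ne x 0 with rfl | hx0
  · exact Or.inl neg_zero
  exact Or.inr (S.ν_neg hx0 ▸ hx.resolve_left hx0)

lemma add_mem_integers_iff {e : F} (he : e ∈ S.integers) {s : F} :
    s + e ∈ S.integers ↔ s ∈ S.integers :=
  ⟨fun h => by simpa using S.add_mem_integers h (S.neg_mem_integers he),
    fun h => S.add_mem_integers h he⟩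

lemma ρ_add_of_pos {e : F} (he : 0 < S.ν e) {s : F} (hs : s ∈ S.integers) :
    S.ρ (s + e) = S.ρ s := by
  rw [S.ρ_add s e hs (Or.inr he.le), (S.ρ_eq_zero e (Or.inr he.le)).mpr (Or.inr he), add_zero]

lemma mem_fracIdeal_neg_iff {x b : F} {γ : Γ} :
    x ∈ S.fracIdeal (-b) (-γ) ↔ (x + b) * S.t γ ∈ S.integers := by
  rw [fracIdeal, Set.mem_ofPred_eq, sub_neg_eq_add, neg_neg]

lemma lift_map {A B : Type*} [Zero A] [Zero B] {φ : A → B} (hφ : φ 0 = 0) (f : k → A)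
    (a : F) (γ : Γ) : S.lift (fun u => φ (f u)) a γ = fun x => φ (S.lift f a γ x) :=
  Set.indicator_comp_of_zero hφ

lemma lift_add_of_lt_ν {A : Type*} [Zero A] (f : k → A) (a : F) (γ : Γ) {τ : F}
    (hτ : τ ≠ 0) (hν : γ < S.ν τ) (y : F) :
    S.lift f a γ (y + τ) = S.lift f a γ y := by
  have he : 0 < S.ν (τ * S.t (-γ)) := by
    rw [S.ν_mul _ _ hτ (S.t_ne _), S.ν_t, ← sub_eq_add_neg]
    exact sub_pos.mpr hν
  have harg : (y + τ - a) * S.t (-γ) = (y - a) * S.t (-γ) + τ * S.t (-γ) := by ring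
  have hmem : y + τ ∈ S.fracIdeal a γ ↔ y ∈ S.fracIdeal a γ := by
    simp only [fracIdeal, Set.mem_ofPred_eq, harg]
    exact S.add_mem_integers_iff (Or.inr he.le)
  unfold lift
  by_cases hy : y ∈ S.fracIdeal a γ
  · rw [Set.indicator_of_mem (hmem.mpr hy), Set.indicator_of_mem hy, harg, S.ρ_add_of_pos he hy]
  · rw [Set.indicator_of_notMem (mt hmem.mp hy), Set.indicator_of_notMem hy]

lemma char_mul_lift {R : Type*} [CommSemiring R] {ψ : F → R}
    (hψ : ∀ x y, ψ (x + y) = ψ x * ψ y) {ψbar : k → R}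
    (hψbar : ∀ x ∈ S.integers, ψbar (S.ρ x) = ψ x) {c : F} {γ : Γ}
    (hc : c * S.t γ ∈ S.integers) (f : k → R) (a y : F) :
    ψ (c * y) * S.lift f a γ y
      = ψ (c * a) * S.lift (fun u => f u * ψbar (u * S.ρ (c * S.t γ))) a γ y := by
  unfold lift
  by_cases hy : y ∈ S.fracIdeal a γ
  · have hcy : c * y = c * a + (y - a) * S.t (-γ) * (c * S.t γ) := by
      rw [mul_mul_mul_comm, ← S.t_add, neg_add_cancel, t_zero]
      ring
    rw [Set.indicator_of_mem hy, Set.indicator_of_mem hy]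
    dsimp only
    rw [hcy, hψ, ← S.ρ_mul _ _ hy hc, hψbar _ (S.mul_mem_integers hy hc)]
    ring
  · simp [Set.indicator_of_notMem hy]

lemma exists_ν_gt_mul_eq {c : F} {γ : Γ} (hc : c * S.t γ ∉ S.integers) {x₀ : F}
    (hx₀ : x₀ ∈ S.integers) (hx₀0 : x₀ ≠ 0) : ∃ τ, τ ≠ 0 ∧ γ < S.ν τ ∧ c * τ = x₀ := by
  have hc0 : c ≠ 0 := by
    rintro rfl
    exact hc (Or.inl (zero_mul _))
  have hcγ : S.ν c + γ < 0 := by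
    refine lt_of_not_ge fun h => hc (Or.inr ?_)
    rwa [S.ν_mul _ _ hc0 (S.t_ne γ), S.ν_t]
  refine ⟨x₀ * c⁻¹, mul_ne_zero hx₀0 (inv_ne_zero hc0), ?_, by field_simp⟩
  rw [S.ν_mul _ _ hx₀0 (inv_ne_zero hc0), S.ν_inv hc0]
  calc γ < -S.ν c := by rwa [← sub_neg, sub_neg_eq_add, add_comm]
    _ ≤ S.ν x₀ + -S.ν c := le_add_of_nonneg_left (hx₀.resolve_left hx₀0)

end LiftSetup

namespace LiftSetup.IsGoodCharacter

variable {Γ F k : Type*} [AddCommGroup Γ] [LinearOrder Γ] [IsOrderedAddMonoid Γ] [Field F] [Field k]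
  [TopologicalSpace k] {S : LiftSetup Γ F k} {ψ : F → ℂ} {𝔣 : Γ}

lemma map_zero (hψ : S.IsGoodCharacter ψ 𝔣) : ψ 0 = 1 := by
  have hne : ψ 0 ≠ 0 := norm_ne_zero_iff.mp (by rw [hψ.2.1]; exact one_ne_zero)
  exact mul_left_cancel₀ hne (by rw [← hψ.1, add_zero, mul_one])

lemma exists_integer_ne_one (hψ : S.IsGoodCharacter ψ S.one) : ∃ x ∈ S.integers, ψ x ≠ 1 := by
  simpa only [sub_self, S.t_zero, one_mul] using hψ.2.2.2.1

lemma norm_residue (hψ : S.IsGoodCharacter ψ 𝔣) {ψbar : k → ℂ}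
    (hψbar : ∀ x ∈ S.integers, ψbar (S.ρ x) = ψ x) (v : k) : ‖ψbar v‖ = 1 := by
  obtain ⟨x, hx, rfl⟩ := S.ρ_surj v
  rw [hψbar x hx, hψ.2.1]

end LiftSetup.IsGoodCharacter

theorem LinearMap.apply_eq_zero_of_translate_eq_smul {K F : Type*} [Field K] [Add F]
    {p : Submodule K (F → K)} (J : p →ₗ[K] K)
    (hJ : ∀ (g : F → K) (hg : g ∈ p) (τ : F) (hg' : (fun x => g (x + τ)) ∈ p),
      J ⟨fun x => g (x + τ), hg'⟩ = J ⟨g, hg⟩)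
    {G : F → K} (hG : G ∈ p) {τ : F} {z : K} (hz : z ≠ 1)
    (hGτ : (fun y => G (y + τ)) = z • G) : J ⟨G, hG⟩ = 0 := by
  have hmem : (fun y => G (y + τ)) ∈ p := hGτ ▸ p.smul_mem z hG
  have h := hJ G hG τ hmem
  rw [show (⟨_, hmem⟩ : p) = z • ⟨G, hG⟩ from Subtype.ext hGτ, map_smul, smul_eq_mul] at h
  exact by_contra fun hne => hz ((mul_eq_right₀ hne).mp h)

section Integral

variable {Γ F k : Type*} [AddCommGroup Γ] [LinearOrder Γ] [IsOrderedAddMonoid Γ] [Field F]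
  [Field k] [MeasurableSpace k] {S : LiftSetup Γ F k} {μ : Measure k} {ψ : F → ℂ}

lemma lift_mem_LFpsi (hψ0 : ψ 0 = 1) {f : k → ℂ} (hf : Integrable f μ) (a : F) (γ : Γ) :
    S.lift (fun u => embC Γ (f u)) a γ ∈ LFpsi S μ ψ :=
  Submodule.subset_span ⟨_, liftC_mem_mu S μ hf a γ, 0, by simp [hψ0]⟩

lemma char_mul_lift_mem_LFpsi {f : k → ℂ} (hf : Integrable f μ) (c a : F) (γ : Γ) :
    (fun y => embC Γ (ψ (c * y)) * S.lift (fun u => embC Γ (f u)) a γ y) ∈ LFpsi S μ ψ :=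
  Submodule.subset_span ⟨_, liftC_mem_mu S μ hf a γ, c, rfl⟩

lemma integral_char_mul_lift_of_mem [TopologicalSpace k] [IsTopologicalRing k] [BorelSpace k]
    (hψ : ∀ x y, ψ (x + y) = ψ x * ψ y) (hψ0 : ψ 0 = 1) {ψbar : k → ℂ}
    (hψbar_cont : Continuous ψbar) (hψbar_norm : ∀ v, ‖ψbar v‖ = 1)
    (hψbar : ∀ x ∈ S.integers, ψbar (S.ρ x) = ψ x)
    (Jext : LFpsi S μ ψ →ₗ[CGamma Γ] CGamma Γ)
    (hJext : ∀ (f : k → ℂ), Integrable f μ → ∀ (a : F) (γ : Γ)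
      (hmem : S.lift (fun u => embC Γ (f u)) a γ ∈ LFpsi S μ ψ),
      Jext ⟨S.lift (fun u => embC Γ (f u)) a γ, hmem⟩ = embC Γ (∫ u, f u ∂μ) * Xp γ)
    {g : k → ℂ} (hg : Integrable g μ) {c a : F} {γ : Γ} (hc : c * S.t γ ∈ S.integers) :
    Jext ⟨_, char_mul_lift_mem_LFpsi hg c a γ⟩
      = embC Γ (ψ (c * a)) * embC Γ (∫ u, g u * ψbar (u * S.ρ (c * S.t γ)) ∂μ) * Xp γ := by
  set h : k → ℂ := fun u => g u * ψbar (u * S.ρ (c * S.t γ))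
  have hh : Integrable h μ :=
    hg.mul_bdd (hψbar_cont.comp (continuous_id.mul continuous_const)).aestronglyMeasurable
      (ae_of_all _ fun _ => (hψbar_norm _).le)
  have hfun : (fun y => embC Γ (ψ (c * y)) * S.lift (fun u => embC Γ (g u)) a γ y)
      = embC Γ (ψ (c * a)) • S.lift (fun u => embC Γ (h u)) a γ := by
    funext y
    simp only [S.lift_map (map_zero (embC Γ)), Pi.smul_apply, smul_eq_mul, ← map_mul,
      S.char_mul_lift hψ hψbar hc, h]
  rw [show (⟨_, _⟩ : LFpsi S μ ψ) = embC Γ (ψ (c * a)) • ⟨_, lift_mem_LFpsi hψ0 hh a γ⟩ from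
    Subtype.ext hfun, map_smul, hJext h hh, smul_eq_mul, mul_assoc]

lemma integral_char_mul_lift_of_not_mem (hψ : ∀ x y, ψ (x + y) = ψ x * ψ y) (hψ0 : ψ 0 = 1)
    (hψ_ne : ∃ x ∈ S.integers, ψ x ≠ 1) (Jext : LFpsi S μ ψ →ₗ[CGamma Γ] CGamma Γ)
    (hJinv : ∀ (g : F → CGamma Γ) (hg : g ∈ LFpsi S μ ψ) (τ : F)
      (hg' : (fun x => g (x + τ)) ∈ LFpsi S μ ψ),
      Jext ⟨fun x => g (x + τ), hg'⟩ = Jext ⟨g, hg⟩)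
    {g : k → ℂ} (hg : Integrable g μ) {c a : F} {γ : Γ} (hc : c * S.t γ ∉ S.integers) :
    Jext ⟨_, char_mul_lift_mem_LFpsi hg c a γ⟩ = 0 := by
  obtain ⟨x₀, hx₀, hψx₀⟩ := hψ_ne
  have hx₀0 : x₀ ≠ 0 := by
    rintro rfl
    exact hψx₀ hψ0
  obtain ⟨τ, hτ, hντ, hcτ⟩ := S.exists_ν_gt_mul_eq hc hx₀ hx₀0
  refine LinearMap.apply_eq_zero_of_translate_eq_smul Jext hJinv _ (τ := τ)
    (z := embC Γ (ψ x₀)) ?_ ?_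
  · rwa [Ne, ← map_one (embC Γ), (embC Γ).injective.eq_iff]
  · funext y
    simp only [Pi.smul_apply, smul_eq_mul, S.lift_add_of_lt_ν _ a γ hτ hντ, mul_add, hψ, hcτ,
      map_mul]
    ring

end Integral

open MeasureTheory in
theorem statement6_general
    {Γ F k : Type*} [AddCommGroup Γ] [LinearOrder Γ] [IsOrderedAddMonoid Γ] [Field F] [Field k]
    [TopologicalSpace k] [IsTopologicalRing k]
    [MeasurableSpace k] [BorelSpace k]
    (μ : Measure k)
    (S : LiftSetup Γ F k)
    (ψ : F → ℂ) (hψ : S.IsGoodCharacter ψ S.one)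
    (ψbar : k → ℂ) (hψbar_cont : Continuous ψbar)
    (hψbar : ∀ x ∈ S.integers, ψbar (S.ρ x) = ψ x)
    (Jext : LFpsi S μ ψ →ₗ[CGamma Γ] CGamma Γ)
    (hJext : ∀ (f : k → ℂ) (hf : Integrable f μ) (a : F) (γ : Γ)
      (hmem : S.lift (fun u => embC Γ (f u)) a γ ∈ LFpsi S μ ψ),
      Jext ⟨S.lift (fun u => embC Γ (f u)) a γ, hmem⟩ = embC Γ (∫ u, f u ∂μ) * Xp γ)
    (hJinv : ∀ (g : F → CGamma Γ) (hg : g ∈ LFpsi S μ ψ) (τ : F)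
      (hg' : (fun x => g (x + τ)) ∈ LFpsi S μ ψ),
      Jext ⟨fun x => g (x + τ), hg'⟩ = Jext ⟨g, hg⟩)
    (g : k → ℂ) (hg : Integrable g μ) (a b : F) (γ : Γ) :
    fourierF S μ ψ Jext
        (fun y => embC Γ (ψ (b * y)) * S.lift (fun u => embC Γ (g u)) a γ y)
      = fun x => embC Γ (ψ (a * b)) * embC Γ (ψ (a * x)) *
          S.lift (fun v => embC Γ (∫ u, g u * ψbar (u * v) ∂μ)) (-b) (-γ) x * Xp γ := by
  have hψ0 := hψ.map_zero
  funext x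
  have hintegrand :
      (fun y => embC Γ (ψ (b * y)) * S.lift (fun u => embC Γ (g u)) a γ y * embC Γ (ψ (x * y)))
        = fun y => embC Γ (ψ ((x + b) * y)) * S.lift (fun u => embC Γ (g u)) a γ y := by
    funext y
    rw [add_mul, hψ.1, map_mul]
    ring
  have hmem := char_mul_lift_mem_LFpsi (S := S) (ψ := ψ) hg (x + b) a γ
  rw [fourierF, dif_pos (hintegrand ▸ hmem), show (⟨_, hintegrand ▸ hmem⟩ : LFpsi S μ ψ)
    = ⟨_, hmem⟩ from Subtype.ext hintegrand]
  by_cases hx : x ∈ S.fracIdeal (-b) (-γ)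
  · rw [integral_char_mul_lift_of_mem hψ.1 hψ0 hψbar_cont (hψ.norm_residue hψbar) hψbar Jext
      hJext hg (S.mem_fracIdeal_neg_iff.mp hx), LiftSetup.lift, Set.indicator_of_mem hx,
      sub_neg_eq_add, neg_neg, show (x + b) * a = a * b + a * x by ring, hψ.1, map_mul]
  · rw [integral_char_mul_lift_of_not_mem hψ.1 hψ0 hψ.exists_integer_ne_one Jext hJinv hg
      (S.mem_fracIdeal_neg_iff.not.mp hx), LiftSetup.lift, Set.indicator_of_notMem hx]
    simp

open MeasureTheory in
/-- For `f = g^{a,γ}·ψ_b` with `g` Haar integrable on `k`, the Fourier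
transform of `f` satisfies `f̂ = ψ(ab)·(ĝ)^{-b,-γ}·ψ_a·X^γ`, where `ĝ` is the Fourier
transform of `g` on `k` with respect to the induced character `ψ̄`. -/
theorem statement6
    {Γ F k : Type*} [AddCommGroup Γ] [LinearOrder Γ] [IsOrderedAddMonoid Γ] [Field F] [Field k]
    [TopologicalSpace k] [IsTopologicalRing k] [LocallyCompactSpace k]
    [MeasurableSpace k] [BorelSpace k]
    (hk_nondiscrete : ¬ IsOpen ({0} : Set k))
    (μ : Measure k) [μ.IsAddHaarMeasure]
    (S : LiftSetup Γ F k)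
    (ψ : F → ℂ) (hψ : S.IsGoodCharacter ψ S.one)
    (ψbar : k → ℂ) (hψbar_cont : Continuous ψbar)
    (hψbar : ∀ x ∈ S.integers, ψbar (S.ρ x) = ψ x)
    (Jext : LFpsi S μ ψ →ₗ[CGamma Γ] CGamma Γ)
    (hJext : ∀ (f : k → ℂ) (hf : Integrable f μ) (a : F) (γ : Γ)
      (hmem : S.lift (fun u => embC Γ (f u)) a γ ∈ LFpsi S μ ψ),
      Jext ⟨S.lift (fun u => embC Γ (f u)) a γ, hmem⟩ = embC Γ (∫ u, f u ∂μ) * Xp γ)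
    (hJinv : ∀ (g : F → CGamma Γ) (hg : g ∈ LFpsi S μ ψ) (τ : F)
      (hg' : (fun x => g (x + τ)) ∈ LFpsi S μ ψ),
      Jext ⟨fun x => g (x + τ), hg'⟩ = Jext ⟨g, hg⟩)
    (g : k → ℂ) (hg : Integrable g μ) (a b : F) (γ : Γ) :
    fourierF S μ ψ Jext
        (fun y => embC Γ (ψ (b * y)) * S.lift (fun u => embC Γ (g u)) a γ y)
      = fun x => embC Γ (ψ (a * b)) * embC Γ (ψ (a * x)) *
          S.lift (fun v => embC Γ (∫ u, g u * ψbar (u * v) ∂μ)) (-b) (-γ) x * Xp γ :=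
  statement6_general μ S ψ hψ ψbar hψbar_cont hψbar Jext hJext hJinv g hg a b γ
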